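/- Let G be a class 2 graph with a critical edge e = rs and let φ be a proper Δ-edge-coloring of G−e. If F is a multifan at r with respect to e and φ, then V(F) is elementary with respect to φ: the missing color sets of distinct vertices in F are pairwise disjoint. -/

import Mathlib

/-- A proper `k`-edge-coloring: colors are in `[k] = {0, …, k-1}` and edges sharing a
vertex receive distinct colors. -/
def IsProperEdgeColoring {V : Type*} (G : SimpleGraph V) (φ : Sym2 V → ℕ) (k : ℕ) : Prop :=
  (∀ e ∈ G.edgeSet, φ e < k) ∧
  ∀ e ∈ G.edgeSet, ∀ f ∈ G.edgeSet, e ≠ f → (∃ v, v ∈ e ∧ v ∈ f) → φ e ≠ φ f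

/-- The chromatic index `χ'(G)`: least `k` admitting a proper `k`-edge-coloring. -/
noncomputable def chromaticIndex {V : Type*} (G : SimpleGraph V) : ℕ :=
  sInf {k | ∃ φ, IsProperEdgeColoring G φ k}

/-- The set of colors of `[Δ]` missing at `v` under `φ` (w.r.t. the graph `G`). -/
def missing {V : Type*} (G : SimpleGraph V) (φ : Sym2 V → ℕ) (Δ : ℕ) (v : V) : Set ℕ :=
  {c | c < Δ ∧ ∀ e ∈ G.edgeSet, v ∈ e → φ e ≠ c}

/-- `s 0, s 1, …, s p` (with the edges `e_i = r s_i`, `e_0 = r s_0` being the uncolored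
edge) forms a multifan at `r` w.r.t. the edge `r s_0` and the coloring `φ` of
`G - r s_0` with colors in `[Δ]`: vertices are distinct, different from `r`, adjacent
to `r`, and for `i ≥ 1` the color `φ(r s_i)` is missing at some earlier `s_j`. -/
def IsMultifan {V : Type*} (G : SimpleGraph V) (φ : Sym2 V → ℕ) (Δ : ℕ)
    (r : V) {p : ℕ} (s : Fin (p + 1) → V) : Prop :=
  Function.Injective s ∧ (∀ i, s i ≠ r) ∧ (∀ i, G.Adj r (s i)) ∧
  ∀ i : Fin (p + 1), i ≠ 0 →
    ∃ j : Fin (p + 1), j < i ∧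
      φ s(r, s i) ∈ missing (G.deleteEdges {s(r, s 0)}) φ Δ (s j)

/-- A multifan at `r` is maximal if it cannot be extended by a further neighbor `t` of
`r` whose edge `r t` is colored with a color missing at some vertex of the fan. -/
def IsMaximalMultifan {V : Type*} (G : SimpleGraph V) (φ : Sym2 V → ℕ) (Δ : ℕ)
    (r : V) {p : ℕ} (s : Fin (p + 1) → V) : Prop :=
  IsMultifan G φ Δ r s ∧
  ∀ t : V, G.Adj r t → t ∉ ({r} ∪ Set.range s : Set V) →
    ∀ j : Fin (p + 1), φ s(r, t) ∉ missing (G.deleteEdges {s(r, s 0)}) φ Δ (s j)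

/-!
A color missing at both `r` and `s_i` can be shifted down the fan: recoloring `r s_i` with it frees
`φ(r s_i)` at `r`, and that color is missing at an earlier `s_j`. At `s_0` the uncolored edge
`r s_0` itself could be colored, giving a `Δ`-edge-coloring of `G`.

If two fan vertices `s_i`, `s_k` (with `i < k` minimal) miss a common color `α`, take `β` missing
at `r`. The `(α, β)`-Kempe components are paths with `r`, `s_i`, `s_k` among their endpoints, so
`s_i` or `s_k` lies in a component avoiding `r`. Swapping `α` and `β` there keeps a shorter fan
intact and makes `β` missing at `r` and at its last vertex, contradicting the first part.
-/

section

open Finset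

variable {V : Type*}

namespace SimpleGraph

theorem degree_deleteEdges_lt {G : SimpleGraph V} {u v : V} [Fintype (G.neighborSet u)]
    [Fintype ((G.deleteEdges {s(u, v)}).neighborSet u)] (h : G.Adj u v) :
    (G.deleteEdges {s(u, v)}).degree u < G.degree u := by
  classical
  rw [← card_neighborFinset_eq_degree, ← card_neighborFinset_eq_degree]
  refine card_lt_card ((ssubset_iff_of_subset fun w hw => ?_).2 ⟨v, by simpa using h, by simp⟩)
  simp only [mem_neighborFinset, deleteEdges_adj] at hw ⊢
  exact hw.1

/-- `2 (n - 1) ≤ 2 |E| = ∑ deg ≤ 2 n - #{x | deg x ≤ 1}`. -/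
theorem Connected.card_filter_degree_le_one_le_two [Fintype V] {K : SimpleGraph V}
    [DecidableRel K.Adj] (hK : K.Connected) (hdeg : ∀ x, K.degree x ≤ 2) :
    #{x | K.degree x ≤ 1} ≤ 2 := by
  have hedges := hK.card_vert_le_card_edgeSet_add_one
  rw [Nat.card_eq_fintype_card, Nat.card_eq_fintype_card, ← edgeFinset_card] at hedges
  have hsum : ∑ x, K.degree x + #{x | K.degree x ≤ 1} ≤ 2 * Fintype.card V := by
    rw [card_filter, ← sum_add_distrib, mul_comm, ← smul_eq_mul, ← card_univ, ← sum_const]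
    exact sum_le_sum fun x _ => by have := hdeg x; split_ifs <;> omega
  have := hK.nonempty.elim fun x => Fintype.card_pos_iff.2 ⟨x⟩
  rw [sum_degrees_eq_twice_card_edges] at hsum
  omega

theorem not_reachable_of_degree_le_one [Fintype V] {H : SimpleGraph V} [DecidableRel H.Adj]
    (hdeg : ∀ x, H.degree x ≤ 2) {a b c : V} (hab : a ≠ b) (hac : a ≠ c) (hbc : b ≠ c)
    (ha : H.degree a ≤ 1) (hb : H.degree b ≤ 1) (hc : H.degree c ≤ 1) (hab' : H.Reachable a b) :
    ¬ H.Reachable a c := by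
  classical
  intro hac'
  let C := H.connectedComponentMk a
  have hdegC : ∀ x : C.supp, (H.induce C.supp).degree x = H.degree x := fun x =>
    degree_induce_of_neighborSet_subset fun _ hy => C.mem_supp_of_adj_mem_supp x.2 hy
  have hC : (H.induce C.supp).Connected := C.connected_toSimpleGraph
  have hle := hC.card_filter_degree_le_one_le_two fun x => (hdegC x).trans_le (hdeg x)
  have hmem : ∀ x, H.Reachable a x → x ∈ C.supp := fun x hx => (ConnectedComponent.sound hx).symm
  refine hle.not_gt (two_lt_card.2 ⟨⟨a, hmem a .rfl⟩, ?_, ⟨b, hmem b hab'⟩, ?_, ⟨c, hmem c hac'⟩,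
    ?_, ?_, ?_, ?_⟩)
  · simpa [hdegC] using ha
  · simpa [hdegC] using hb
  · simpa [hdegC] using hc
  · simpa using hab
  · simpa using hac
  · simpa using hbc

end SimpleGraph

namespace IsProperEdgeColoring

variable {G : SimpleGraph V} {φ : Sym2 V → ℕ} {k : ℕ}

theorem chromaticIndex_le (hφ : IsProperEdgeColoring G φ k) : chromaticIndex G ≤ k :=
  Nat.sInf_le ⟨φ, hφ⟩

theorem injOn_neighborSet (hφ : IsProperEdgeColoring G φ k) (x : V) :
    Set.InjOn (fun y => φ s(x, y)) (G.neighborSet x) := by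
  intro y₁ hy₁ y₂ hy₂ h
  by_contra hne
  exact hφ.2 _ hy₁ _ hy₂ (fun h' => hne (Sym2.congr_right.mp h'))
    ⟨x, Sym2.mem_mk_left x y₁, Sym2.mem_mk_left x y₂⟩ h

theorem update [DecidableEq V] {H : SimpleGraph V} {u v : V} {γ : ℕ}
    (hφ : IsProperEdgeColoring H φ k) (hGH : G.deleteEdges {s(u, v)} ≤ H)
    (hu : γ ∈ missing H φ k u) (hv : γ ∈ missing H φ k v) :
    IsProperEdgeColoring G (Function.update φ s(u, v) γ) k := by
  have hH : ∀ e ∈ G.edgeSet, e ≠ s(u, v) → e ∈ H.edgeSet := fun e he hne =>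
    SimpleGraph.edgeSet_mono hGH (by simp [SimpleGraph.edgeSet_deleteEdges, he, hne])
  have hmiss : ∀ e ∈ H.edgeSet, ∀ x ∈ s(u, v), x ∈ e → φ e ≠ γ := by
    intro e he x hx hxe
    rcases Sym2.mem_iff.mp hx with rfl | rfl
    exacts [hu.2 e he hxe, hv.2 e he hxe]
  refine ⟨fun e he => ?_, fun e he f hf hef ⟨x, hxe, hxf⟩ => ?_⟩
  · rcases eq_or_ne e s(u, v) with rfl | hne
    · simpa using hu.1
    · simpa [hne] using hφ.1 e (hH e he hne)
  · rcases eq_or_ne e s(u, v) with rfl | hne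
    · simpa [hef.symm] using (hmiss f (hH f hf hef.symm) x hxe hxf).symm
    · rcases eq_or_ne f s(u, v) with rfl | hne'
      · simpa [hne] using hmiss e (hH e he hne) x hxf hxe
      · simpa [hne, hne'] using hφ.2 e (hH e he hne) f (hH f hf hne') hef ⟨x, hxe, hxf⟩

theorem mem_missing_update_self [DecidableEq V] (hφ : IsProperEdgeColoring G φ k) {e : Sym2 V}
    (he : e ∈ G.edgeSet) {x : V} (hx : x ∈ e) {γ : ℕ} (hγ : γ ∈ missing G φ k x) :
    φ e ∈ missing G (Function.update φ e γ) k x := by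
  refine ⟨hφ.1 e he, fun f hf hxf => ?_⟩
  rcases eq_or_ne f e with rfl | hne
  · simpa using (hγ.2 f hf hxf).symm
  · simpa [hne] using hφ.2 f hf e he hne ⟨x, hxf, hx⟩

end IsProperEdgeColoring

section Missing

variable {G : SimpleGraph V} {φ : Sym2 V → ℕ} {k : ℕ}

theorem missing_update_of_notMem [DecidableEq V] {e : Sym2 V} {γ : ℕ} {x : V} (hx : x ∉ e) :
    missing G (Function.update φ e γ) k x = missing G φ k x := by
  ext c
  refine and_congr_right fun _ => forall₂_congr fun f _ => imp_congr_right fun hxf => ?_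
  rw [Function.update_of_ne (fun h => hx (by rwa [h] at hxf))]

theorem exists_mem_missing (φ : Sym2 V → ℕ) {x : V} [Fintype (G.neighborSet x)]
    (hx : G.degree x < k) : ∃ c, c ∈ missing G φ k x := by
  classical
  by_contra! h
  have hsub : range k ⊆ (G.neighborFinset x).image fun y => φ s(x, y) := by
    intro c hc
    have : ¬ ∀ e ∈ G.edgeSet, x ∈ e → φ e ≠ c := fun h' => h c ⟨mem_range.mp hc, h'⟩
    push Not at this
    obtain ⟨e, he, hxe, rfl⟩ := this
    obtain ⟨y, rfl⟩ := Sym2.mem_iff_exists.mp hxe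
    exact mem_image.mpr ⟨y, by simpa using he, rfl⟩
  have := (card_le_card hsub).trans card_image_le
  rw [card_range, SimpleGraph.card_neighborFinset_eq_degree] at this
  omega

end Missing

theorem Equiv.swap_apply_lt {α β c k : ℕ} (hα : α < k) (hβ : β < k) (hc : c < k) :
    Equiv.swap α β c < k := by
  rw [Equiv.swap_apply_def]
  split_ifs <;> assumption

section Kempe

variable {G : SimpleGraph V} {φ : Sym2 V → ℕ} {k α β : ℕ}

def kempeGraph (G : SimpleGraph V) (φ : Sym2 V → ℕ) (α β : ℕ) : SimpleGraph V :=
  G.deleteEdges (φ ⁻¹' {α, β}ᶜ)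

theorem kempeGraph_adj {x y : V} :
    (kempeGraph G φ α β).Adj x y ↔ G.Adj x y ∧ (φ s(x, y) = α ∨ φ s(x, y) = β) := by
  simp only [kempeGraph, SimpleGraph.deleteEdges_adj, Set.mem_compl_iff, Set.mem_preimage,
    Set.mem_insert_iff, Set.mem_singleton_iff, not_not]

/-- Swaps `α` and `β` on the edges meeting the `(α, β)`-Kempe component of `v`. This is the usual
Kempe change: such an edge colored `α` or `β` lies in the component, and the swap fixes every other
color. -/
noncomputable def kempeSwap (G : SimpleGraph V) (φ : Sym2 V → ℕ) (α β : ℕ) (v : V)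
    (e : Sym2 V) : ℕ :=
  open Classical in
  if ∃ x ∈ e, (kempeGraph G φ α β).Reachable v x then Equiv.swap α β (φ e) else φ e

theorem kempeSwap_of_reachable {v x : V} {e : Sym2 V} (hx : x ∈ e)
    (h : (kempeGraph G φ α β).Reachable v x) : kempeSwap G φ α β v e = Equiv.swap α β (φ e) :=
  if_pos ⟨x, hx, h⟩

theorem kempeSwap_of_not_reachable {v x : V} {e : Sym2 V} (he : e ∈ G.edgeSet) (hx : x ∈ e)
    (h : ¬ (kempeGraph G φ α β).Reachable v x) : kempeSwap G φ α β v e = φ e := by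
  obtain ⟨y, rfl⟩ := Sym2.mem_iff_exists.mp hx
  unfold kempeSwap
  split_ifs with hreach
  · obtain ⟨z, hz, hvz⟩ := hreach
    have hzy : z = y := (Sym2.mem_iff.mp hz).resolve_left fun hzx => h (hzx ▸ hvz)
    subst hzy
    refine Equiv.swap_apply_of_ne_of_ne (fun hα => h ?_) (fun hβ => h ?_) <;>
      exact hvz.trans (kempeGraph_adj.mpr ⟨he, by tauto⟩).symm.reachable
  · rfl

theorem IsProperEdgeColoring.kempeSwap (hφ : IsProperEdgeColoring G φ k) (hα : α < k)
    (hβ : β < k) (v : V) : IsProperEdgeColoring G (kempeSwap G φ α β v) k := by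
  classical
  refine ⟨fun e he => ?_, fun e he f hf hef ⟨x, hxe, hxf⟩ => ?_⟩
  · unfold _root_.kempeSwap
    split_ifs
    exacts [Equiv.swap_apply_lt hα hβ (hφ.1 e he), hφ.1 e he]
  · have hne := hφ.2 e he f hf hef ⟨x, hxe, hxf⟩
    by_cases h : (kempeGraph G φ α β).Reachable v x
    · rw [kempeSwap_of_reachable hxe h, kempeSwap_of_reachable hxf h]
      exact (Equiv.swap α β).injective.ne hne
    · rwa [kempeSwap_of_not_reachable he hxe h, kempeSwap_of_not_reachable hf hxf h]

theorem missing_kempeSwap_of_not_reachable {v x : V} (h : ¬ (kempeGraph G φ α β).Reachable v x) :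
    missing G (kempeSwap G φ α β v) k x = missing G φ k x := by
  ext c
  refine and_congr_right fun _ => forall₂_congr fun e he => imp_congr_right fun hxe => ?_
  rw [kempeSwap_of_not_reachable he hxe h]

theorem mem_missing_kempeSwap_of_reachable {v x : V} {c : ℕ} (hα : α < k) (hβ : β < k)
    (h : (kempeGraph G φ α β).Reachable v x) :
    c ∈ missing G (kempeSwap G φ α β v) k x ↔ Equiv.swap α β c ∈ missing G φ k x := by
  refine and_congr ⟨Equiv.swap_apply_lt hα hβ, fun hc => by simpa using Equiv.swap_apply_lt hα hβ hc⟩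
    (forall₂_congr fun e _ => imp_congr_right fun hxe => ?_)
  rw [kempeSwap_of_reachable hxe h, Ne, Ne, Equiv.swap_apply_eq_iff]

theorem kempeGraph_degree_le_two (hφ : IsProperEdgeColoring G φ k) (x : V)
    [Fintype ((kempeGraph G φ α β).neighborSet x)] : (kempeGraph G φ α β).degree x ≤ 2 := by
  classical
  rw [← SimpleGraph.card_neighborFinset_eq_degree]
  refine (card_le_card_of_injOn (fun y => φ s(x, y)) (t := {α, β}) ?_ ?_).trans card_le_two
  · intro y hy
    simpa using (kempeGraph_adj.mp ((SimpleGraph.mem_neighborFinset _ _ _).mp hy)).2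
  · exact (hφ.injOn_neighborSet x).mono fun y hy => (kempeGraph_adj.mp (by simpa using hy)).1

theorem kempeGraph_degree_le_one (hφ : IsProperEdgeColoring G φ k) {x : V}
    [Fintype ((kempeGraph G φ α β).neighborSet x)] {γ : ℕ} (hγ : γ = α ∨ γ = β)
    (hx : γ ∈ missing G φ k x) : (kempeGraph G φ α β).degree x ≤ 1 := by
  rw [← SimpleGraph.card_neighborFinset_eq_degree, card_le_one]
  intro y₁ hy₁ y₂ hy₂
  obtain ⟨hadj₁, hc₁⟩ := kempeGraph_adj.mp ((SimpleGraph.mem_neighborFinset _ _ _).mp hy₁)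
  obtain ⟨hadj₂, hc₂⟩ := kempeGraph_adj.mp ((SimpleGraph.mem_neighborFinset _ _ _).mp hy₂)
  have h₁ := hx.2 _ hadj₁ (Sym2.mem_mk_left x y₁)
  have h₂ := hx.2 _ hadj₂ (Sym2.mem_mk_left x y₂)
  exact hφ.injOn_neighborSet x hadj₁ hadj₂ (by simp only; omega)

end Kempe

namespace IsMultifan

variable {G : SimpleGraph V} {Δ : ℕ} {r : V} {p : ℕ} {s : Fin (p + 1) → V} {φ : Sym2 V → ℕ}

theorem notMem_edge (hs : IsMultifan G φ Δ r s) {i j : Fin (p + 1)} (hij : i ≠ j) :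
    s i ∉ s(r, s j) := by
  rw [Sym2.mem_iff, not_or]
  exact ⟨hs.2.1 i, hs.1.ne hij⟩

theorem edge_mem_deleteEdges (hs : IsMultifan G φ Δ r s) {i : Fin (p + 1)} (hi : i ≠ 0) :
    s(r, s i) ∈ (G.deleteEdges {s(r, s 0)}).edgeSet := by
  rw [SimpleGraph.edgeSet_deleteEdges, Set.mem_sdiff, Set.mem_singleton_iff, Sym2.congr_right]
  exact ⟨hs.2.2.1 i, hs.1.ne hi⟩

theorem castLE (hs : IsMultifan G φ Δ r s) {m : ℕ} (h : m + 1 ≤ p + 1) :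
    IsMultifan G φ Δ r (s ∘ Fin.castLE h) := by
  obtain ⟨hinj, hne, hadj, hfan⟩ := hs
  refine ⟨hinj.comp (Fin.castLE_injective h), fun i => hne _, fun i => hadj _, fun i hi => ?_⟩
  have hi' : Fin.castLE h i ≠ 0 := by
    rw [Ne, Fin.ext_iff] at hi ⊢
    exact hi
  obtain ⟨j, hji, hj⟩ := hfan (Fin.castLE h i) hi'
  have hjm : j.val < m + 1 := lt_trans (Fin.lt_def.mp hji) i.isLt
  exact ⟨⟨j, hjm⟩, hji, hj⟩

theorem recolor {ψ : Sym2 V → ℕ} (hs : IsMultifan G φ Δ r s)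
    (hedge : ∀ k, k ≠ 0 → ψ s(r, s k) = φ s(r, s k))
    (hmiss : ∀ k j, k ≠ 0 → j < k → φ s(r, s k) ∈ missing (G.deleteEdges {s(r, s 0)}) φ Δ (s j) →
      φ s(r, s k) ∈ missing (G.deleteEdges {s(r, s 0)}) ψ Δ (s j)) :
    IsMultifan G ψ Δ r s := by
  refine ⟨hs.1, hs.2.1, hs.2.2.1, fun k hk => ?_⟩
  obtain ⟨j, hjk, hj⟩ := hs.2.2.2 k hk
  exact ⟨j, hjk, hedge k hk ▸ hmiss k j hk hjk hj⟩

theorem disjoint_missing_center (hs : IsMultifan G φ Δ r s)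
    (hG : ∀ ψ, ¬ IsProperEdgeColoring G ψ Δ)
    (hφ : IsProperEdgeColoring (G.deleteEdges {s(r, s 0)}) φ Δ) (i : Fin (p + 1)) :
    Disjoint (missing (G.deleteEdges {s(r, s 0)}) φ Δ r)
      (missing (G.deleteEdges {s(r, s 0)}) φ Δ (s i)) := by
  classical
  induction hn : i.val using Nat.strong_induction_on generalizing p s φ i with
  | _ n ih =>
  rw [Set.disjoint_left]
  intro γ hγr hγi
  rcases eq_or_ne i 0 with rfl | hi
  · exact hG _ (hφ.update le_rfl hγr hγi)
  obtain ⟨w, hwi, hw⟩ := hs.2.2.2 i hi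
  have he := hs.edge_mem_deleteEdges hi
  have hψ := hφ.update (SimpleGraph.deleteEdges_le _) hγr hγi
  have hcr := hφ.mem_missing_update_self he (Sym2.mem_mk_left _ _) hγr
  set ψ := Function.update φ s(r, s i) γ
  have hcw : φ s(r, s i) ∈ missing (G.deleteEdges {s(r, s 0)}) ψ Δ (s w) :=
    (missing_update_of_notMem (hs.notMem_edge hwi.ne)).ge hw
  have hne : ∀ k : Fin (w + 1), Fin.castLE w.isLt k ≠ i := fun k =>
    Fin.ne_of_lt (Nat.lt_of_lt_of_le k.isLt hwi)
  have ht : IsMultifan G ψ Δ r (s ∘ Fin.castLE w.isLt) := by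
    refine (hs.castLE w.isLt).recolor (fun k _ => Function.update_of_ne ?_ _ _)
      fun k j _ _ hj => ?_
    · exact fun h => hs.notMem_edge (hne k) (h ▸ Sym2.mem_mk_right _ _)
    · exact (missing_update_of_notMem (hs.notMem_edge (hne j))).ge hj
  exact Set.disjoint_left.mp (ih w (hn ▸ hwi) ht hψ (Fin.last w) rfl) hcr hcw

/-- Swapping `α` and `β` on the Kempe component of `s_x` makes `β` missing at both `r` and `s_x`,
while the fan up to `s_x` survives because no earlier vertex missing `α` lies in that component. -/
theorem kempeGraph_reachable (hs : IsMultifan G φ Δ r s)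
    (hG : ∀ ψ, ¬ IsProperEdgeColoring G ψ Δ)
    (hφ : IsProperEdgeColoring (G.deleteEdges {s(r, s 0)}) φ Δ) {α β : ℕ} {x : Fin (p + 1)}
    (hα : α ∈ missing (G.deleteEdges {s(r, s 0)}) φ Δ (s x))
    (hβ : β ∈ missing (G.deleteEdges {s(r, s 0)}) φ Δ r)
    (hm : ∀ m < x, α ∈ missing (G.deleteEdges {s(r, s 0)}) φ Δ (s m) →
      ¬ (kempeGraph (G.deleteEdges {s(r, s 0)}) φ α β).Reachable (s x) (s m)) :
    (kempeGraph (G.deleteEdges {s(r, s 0)}) φ α β).Reachable r (s x) := by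
  by_contra hrx
  set σ := kempeSwap (G.deleteEdges {s(r, s 0)}) φ α β (s x)
  have hσ : IsProperEdgeColoring _ σ Δ := hφ.kempeSwap hα.1 hβ.1 (s x)
  have hβr : β ∈ missing (G.deleteEdges {s(r, s 0)}) σ Δ r :=
    (missing_kempeSwap_of_not_reachable fun h => hrx h.symm).ge hβ
  have hβx : β ∈ missing (G.deleteEdges {s(r, s 0)}) σ Δ (s x) :=
    (mem_missing_kempeSwap_of_reachable hα.1 hβ.1 .rfl).2 (by simpa using hα)
  have hle : ∀ k : Fin (x + 1), Fin.castLE x.isLt k ≤ x := fun k => Nat.le_of_lt_succ k.isLt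
  have ht : IsMultifan G σ Δ r (s ∘ Fin.castLE x.isLt) := by
    refine (hs.castLE x.isLt).recolor (fun k hk => ?_) fun k j hk hjk hj => ?_
    · exact kempeSwap_of_not_reachable ((hs.castLE x.isLt).edge_mem_deleteEdges hk)
        (Sym2.mem_mk_left _ _) fun h => hrx h.symm
    · by_cases hreach : (kempeGraph (G.deleteEdges {s(r, s 0)}) φ α β).Reachable (s x)
        (s (Fin.castLE x.isLt j))
      · have hcα : φ s(r, s (Fin.castLE x.isLt k)) ≠ α := fun hcα =>
          hm _ (lt_of_lt_of_le ((Fin.castLE_lt_castLE_iff _).2 hjk) (hle k)) (hcα ▸ hj) hreach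
        have hcβ : φ s(r, s (Fin.castLE x.isLt k)) ≠ β :=
          hβ.2 _ ((hs.castLE x.isLt).edge_mem_deleteEdges hk) (Sym2.mem_mk_left _ _)
        have hswap := (mem_missing_kempeSwap_of_reachable
          (c := φ s(r, s (Fin.castLE x.isLt k))) hα.1 hβ.1 hreach).2
        rw [Equiv.swap_apply_of_ne_of_ne hcα hcβ] at hswap
        exact hswap hj
      · exact (missing_kempeSwap_of_not_reachable hreach).ge hj
  exact Set.disjoint_left.mp (ht.disjoint_missing_center hG hσ (Fin.last x)) hβr hβx

theorem disjoint_missing_of_lt [Fintype V] [DecidableRel G.Adj]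
    (hs : IsMultifan G φ G.maxDegree r s) (hG : ∀ ψ, ¬ IsProperEdgeColoring G ψ G.maxDegree)
    (hφ : IsProperEdgeColoring (G.deleteEdges {s(r, s 0)}) φ G.maxDegree)
    {i k : Fin (p + 1)} (hik : i < k) :
    Disjoint (missing (G.deleteEdges {s(r, s 0)}) φ G.maxDegree (s i))
      (missing (G.deleteEdges {s(r, s 0)}) φ G.maxDegree (s k)) := by
  classical
  induction k using WellFoundedLT.induction generalizing i with
  | _ k ih =>
  rw [Set.disjoint_left]
  intro α hαi hαk
  obtain ⟨β, hβ⟩ := exists_mem_missing φ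
    ((SimpleGraph.degree_deleteEdges_lt (hs.2.2.1 0)).trans_le (G.degree_le_maxDegree r))
  have helem : ∀ m < k, m ≠ i →
      α ∉ missing (G.deleteEdges {s(r, s 0)}) φ G.maxDegree (s m) := by
    intro m hm hmi hαm
    rcases hmi.lt_or_gt with hmi | hmi
    · exact Set.disjoint_left.mp (ih i hik hmi) hαm hαi
    · exact Set.disjoint_left.mp (ih m hm hmi) hαi hαm
  have hri := hs.kempeGraph_reachable hG hφ hαi hβ fun m hm hαm _ =>
    helem m (hm.trans hik) hm.ne hαm
  have hrk : (kempeGraph (G.deleteEdges {s(r, s 0)}) φ α β).Reachable r (s k) := by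
    by_contra hrk
    refine hrk (hs.kempeGraph_reachable hG hφ hαk hβ fun m hm hαm hkm => ?_)
    rcases eq_or_ne m i with rfl | hmi
    · exact hrk (hri.trans hkm.symm)
    · exact helem m hm hmi hαm
  exact SimpleGraph.not_reachable_of_degree_le_one (fun x => kempeGraph_degree_le_two hφ x)
    (hs.2.1 i).symm (hs.2.1 k).symm (hs.1.ne hik.ne) (kempeGraph_degree_le_one hφ (.inr rfl) hβ)
    (kempeGraph_degree_le_one hφ (.inl rfl) hαi) (kempeGraph_degree_le_one hφ (.inl rfl) hαk)
    hri hrk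

end IsMultifan

end

theorem multifan_elementary_general {V : Type*} [Fintype V]
    (G : SimpleGraph V) [DecidableRel G.Adj] (r : V) {p : ℕ} (s : Fin (p + 1) → V)
    (hclass2 : chromaticIndex G = G.maxDegree + 1)
    (φ : Sym2 V → ℕ)
    (hφ : IsProperEdgeColoring (G.deleteEdges {s(r, s 0)}) φ G.maxDegree)
    (hF : IsMultifan G φ G.maxDegree r s) :
    ({r} ∪ Set.range s : Set V).Pairwise fun u v =>
      Disjoint (missing (G.deleteEdges {s(r, s 0)}) φ G.maxDegree u)
               (missing (G.deleteEdges {s(r, s 0)}) φ G.maxDegree v) := by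
  have hG : ∀ ψ, ¬ IsProperEdgeColoring G ψ G.maxDegree := fun ψ hψ => by
    have := hψ.chromaticIndex_le
    omega
  refine Set.pairwise_union_of_symm.2 ⟨Set.pairwise_singleton _ _, ?_, ?_⟩
  · exact Pairwise.range_pairwise ((pairwise_disjoint_on _).2 fun i k hik =>
      hF.disjoint_missing_of_lt hG hφ hik)
  · rintro _ rfl _ ⟨i, rfl⟩ -
    exact hF.disjoint_missing_center hG hφ i

/-- If `F` is a multifan at `r` w.r.t. the critical edge `r s₀` and `φ`, then `V(F)` is
elementary: the missing color sets of distinct vertices of the fan (including `r`)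
are pairwise disjoint. -/
theorem multifan_elementary {V : Type*} [Fintype V] [DecidableEq V]
    (G : SimpleGraph V) [DecidableRel G.Adj] (r : V) {p : ℕ} (s : Fin (p + 1) → V)
    (hclass2 : chromaticIndex G = G.maxDegree + 1)
    (hcrit : chromaticIndex (G.deleteEdges {s(r, s 0)}) < chromaticIndex G)
    (φ : Sym2 V → ℕ)
    (hφ : IsProperEdgeColoring (G.deleteEdges {s(r, s 0)}) φ G.maxDegree)
    (hF : IsMultifan G φ G.maxDegree r s) :
    ({r} ∪ Set.range s : Set V).Pairwise fun u v =>
      Disjoint (missing (G.deleteEdges {s(r, s 0)}) φ G.maxDegree u)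
               (missing (G.deleteEdges {s(r, s 0)}) φ G.maxDegree v) :=
  multifan_elementary_general G r s hclass2 φ hφ hF
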